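/- Let G ≤ Aut(X,λ) be an ergodic subgroup with a countable weakly-dense subgroup, and let A, B be Borel subsets of X with λ(A) = λ(B) (possibly infinite). Then there exists a partial isomorphism φ in the pseudo-full group of G with domain A and range B, i.e., there are countable Borel partitions (A_n) of A and (B_n) of B and elements T_n ∈ G with T_n(A_n) = B_n and φ = T_n on A_n. -/

import Mathlib

open MeasureTheory Set Filter Topology Function
open scoped ENNReal symmDiff

variable {X : Type*}

def supp (T : X → X) : Set X := {x | T x ≠ x}

def IsMPBij [MeasurableSpace X] (ν : MeasureTheory.Measure X) (T : X → X) : Prop :=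
  Measurable T ∧ Function.Bijective T ∧ MeasureTheory.MeasurePreserving T ν ν

def IsMPSubgroup [MeasurableSpace X] (ν : MeasureTheory.Measure X) (G : Set (X → X)) : Prop :=
  (∀ T ∈ G, IsMPBij ν T) ∧ id ∈ G ∧ (∀ T ∈ G, ∀ S ∈ G, T ∘ S ∈ G) ∧
    ∀ T ∈ G, ∃ S ∈ G, Function.LeftInverse S T ∧ Function.RightInverse S T

def IsErgodicSet [MeasurableSpace X] (ν : MeasureTheory.Measure X) (G : Set (X → X)) : Prop :=
  ∀ A : Set X, MeasurableSet A → (∀ T ∈ G, ν ((T '' A) ∆ A) = 0) → ν A = 0 ∨ ν Aᶜ = 0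

def IsFullGroup [MeasurableSpace X] (ν : MeasureTheory.Measure X) (G : Set (X → X)) : Prop :=
  IsMPSubgroup ν G ∧
  (∀ T S : X → X, T ∈ G → IsMPBij ν S → T =ᵐ[ν] S → S ∈ G) ∧
  ∀ (T : X → X) (Ts : ℕ → X → X) (A : ℕ → Set X),
    IsMPBij ν T → (∀ n, Ts n ∈ G) → (∀ n, MeasurableSet (A n)) →
    Pairwise (Disjoint on A) → (⋃ n, A n) = Set.univ →
    (∀ n, ∀ x ∈ A n, T x = Ts n x) → T ∈ G

def WeakTendsto [MeasurableSpace X] (ν : MeasureTheory.Measure X)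
    (T : ℕ → X → X) (S : X → X) : Prop :=
  ∀ B : Set X, MeasurableSet B → ν B < ⊤ →
    Filter.Tendsto (fun n => ν ((T n '' B) ∆ (S '' B))) Filter.atTop (nhds 0)

def fullGroupGen [MeasurableSpace X] (ν : MeasureTheory.Measure X) (T : X → X) :
    Set (X → X) :=
  {S | ∀ G : Set (X → X), IsFullGroup ν G → T ∈ G → S ∈ G}

lemma IsMPBij.emb [MeasurableSpace X] [StandardBorelSpace X] {ν : Measure X} {T : X → X}
    (h : IsMPBij ν T) : MeasurableEmbedding T :=
  h.1.measurableEmbedding h.2.1.1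

lemma IsMPBij.measure_image [MeasurableSpace X] [StandardBorelSpace X] {ν : Measure X}
    {T : X → X} (h : IsMPBij ν T) {s : Set X} (hs : MeasurableSet s) :
    ν (T '' s) = ν s := by
  have emb := h.emb
  have h2 : T ⁻¹' (T '' s) = s := preimage_image_eq s h.2.1.1
  calc ν (T '' s) = ν (T ⁻¹' (T '' s)) :=
        (h.2.2.measure_preimage (emb.measurableSet_image' hs).nullMeasurableSet).symm
    _ = ν s := by rw [h2]

lemma invariance_lemma [MeasurableSpace X] [StandardBorelSpace X]
    (ν : Measure X) [SigmaFinite ν]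
    (G : Set (X → X)) (hG : IsMPSubgroup ν G)
    (D : Set (X → X))
    (hdense : ∀ T ∈ G, ∃ Ts : ℕ → X → X, (∀ n, Ts n ∈ D) ∧ WeakTendsto ν Ts T)
    (C : Set X) (hC : MeasurableSet C) (hinv : ∀ S ∈ D, S '' C ⊆ C) :
    ∀ T ∈ G, ν ((T '' C) ∆ C) = 0 := by
  have hdiff : ∀ T ∈ G, ν (T '' C \ C) = 0 := by
    intro T hT
    obtain ⟨Ts, hTs, hweak⟩ := hdense T hT
    have key : ∀ E : Set X, MeasurableSet E → E ⊆ C → ν E ≠ ∞ → ν (T '' E \ C) = 0 := by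
      intro E hE hEC hEfin
      have h1 : ∀ n, T '' E \ C ⊆ (Ts n '' E) ∆ (T '' E) := by
        intro n x hx
        rcases hx with ⟨hx1, hx2⟩
        have hxn : x ∉ Ts n '' E := by
          intro hmem
          exact hx2 (hinv _ (hTs n) (image_mono hEC hmem))
        exact Or.inr ⟨hx1, hxn⟩
      have htend := hweak E hE (lt_top_iff_ne_top.2 hEfin)
      have hle : ∀ n, ν (T '' E \ C) ≤ ν ((Ts n '' E) ∆ (T '' E)) :=
        fun n => measure_mono (h1 n)
      have := ge_of_tendsto' htend hle
      exact le_antisymm this zero_le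
    have hCdecomp : T '' C \ C = ⋃ k, T '' (C ∩ spanningSets ν k) \ C := by
      ext x
      constructor
      · rintro ⟨⟨c, hc, rfl⟩, hx2⟩
        have hc2 : c ∈ ⋃ k, spanningSets ν k := by rw [iUnion_spanningSets]; trivial
        obtain ⟨k, hk⟩ := mem_iUnion.1 hc2
        exact mem_iUnion.2 ⟨k, ⟨⟨c, ⟨hc, hk⟩, rfl⟩, hx2⟩⟩
      · rintro h
        obtain ⟨k, ⟨⟨c, ⟨hc, -⟩, rfl⟩, h2⟩⟩ := mem_iUnion.1 h
        exact ⟨⟨c, hc, rfl⟩, h2⟩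
    rw [hCdecomp]
    refine measure_iUnion_null fun k => key _ (hC.inter (measurableSet_spanningSets ν k))
      inter_subset_left ?_
    exact ((measure_mono inter_subset_right).trans_lt (measure_spanningSets_lt_top ν k)).ne
  intro T hT
  obtain ⟨T', hT', hli, hri⟩ := hG.2.2.2 T hT
  have hTbij := hG.1 T hT
  have hT'bij := hG.1 T' hT'
  have hCT' : C \ T '' C = T '' (T' '' C \ C) := by
    ext x
    constructor
    · rintro ⟨hx1, hx2⟩
      refine ⟨T' x, ⟨⟨x, hx1, rfl⟩, fun hc => hx2 ⟨T' x, hc, hri x⟩⟩, hri x⟩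
    · rintro ⟨y, ⟨⟨c, hc, rfl⟩, hy2⟩, rfl⟩
      rw [hri c]
      refine ⟨hc, fun hc2 => ?_⟩
      rcases hc2 with ⟨z, hz, hzx⟩
      have : z = T' c := by rw [← hzx, hli z]
      rw [← this] at hy2; exact hy2 hz
  have hT'C : MeasurableSet (T' '' C \ C) := (hT'bij.emb.measurableSet_image' hC).diff hC
  have h2 : ν (C \ T '' C) = ν (T' '' C \ C) := by
    rw [hCT', hTbij.measure_image hT'C]
  rw [Set.symmDiff_def]
  refine measure_union_null (hdiff T hT) ?_
  rw [h2]
  exact hdiff T' hT'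

def greedySeq (e : ℕ → X → X) (A B : Set X) : ℕ → Set X × Set X
  | 0 => (∅, ∅)
  | n + 1 =>
    let u := greedySeq e A B n
    let An := (A \ u.1) ∩ (e n) ⁻¹' (B \ u.2)
    (u.1 ∪ An, u.2 ∪ e n '' An)

lemma exchange_core [MeasurableSpace X] [StandardBorelSpace X]
    (ν : Measure X) [SigmaFinite ν]
    (G : Set (X → X)) (hG : IsMPSubgroup ν G) (herg : IsErgodicSet ν G)
    (D : Set (X → X)) (hDsub : D ⊆ G) (hDcount : D.Countable) (hDgrp : IsMPSubgroup ν D)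
    (hdense : ∀ T ∈ G, ∃ Ts : ℕ → X → X, (∀ n, Ts n ∈ D) ∧ WeakTendsto ν Ts T)
    (A B : Set X) (hA : MeasurableSet A) (hB : MeasurableSet B)
    (hBA : ν B ≤ ν A) (hfinA : ν A ≠ ⊤) :
    ∃ (An Bn : ℕ → Set X) (Tn : ℕ → X → X),
      (∀ n, MeasurableSet (An n)) ∧ (∀ n, An n ⊆ A) ∧ Pairwise (Disjoint on An) ∧
      (∀ n, MeasurableSet (Bn n)) ∧ (∀ n, Bn n ⊆ B) ∧ Pairwise (Disjoint on Bn) ∧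
      ν (B \ ⋃ n, Bn n) = 0 ∧ ν (⋃ n, An n) = ν B ∧
      (∀ n, Tn n ∈ G) ∧ (∀ n, Tn n '' An n = Bn n) := by
  -- enumeration of D
  obtain ⟨e, he⟩ := hDcount.exists_eq_range ⟨id, hDgrp.2.1⟩
  have heD : ∀ n, e n ∈ D := fun n => he ▸ mem_range_self n
  have heG : ∀ n, e n ∈ G := fun n => hDsub (heD n)
  have hebij : ∀ n, IsMPBij ν (e n) := fun n => hG.1 _ (heG n)
  -- basic defs
  set gA : ℕ → Set X := fun n => (greedySeq e A B n).1 with hgA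
  set gB : ℕ → Set X := fun n => (greedySeq e A B n).2 with hgB
  set An : ℕ → Set X := fun n => (A \ gA n) ∩ (e n) ⁻¹' (B \ gB n) with hAn
  set Bn : ℕ → Set X := fun n => e n '' An n with hBn
  have hstep : ∀ n, gA (n+1) = gA n ∪ An n ∧ gB (n+1) = gB n ∪ Bn n := fun n => ⟨rfl, rfl⟩
  -- measurability
  have hmeas : ∀ n, MeasurableSet (gA n) ∧ MeasurableSet (gB n) := by
    intro n
    induction n with
    | zero => exact ⟨MeasurableSet.empty, MeasurableSet.empty⟩
    | succ m ih =>
      have hAm : MeasurableSet (An m) :=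
        (hA.diff ih.1).inter ((hebij m).1 (hB.diff ih.2))
      exact ⟨((hstep m).1).symm ▸ ih.1.union hAm,
        ((hstep m).2).symm ▸ ih.2.union ((hebij m).emb.measurableSet_image' hAm)⟩
  have hAnmeas : ∀ n, MeasurableSet (An n) := fun n =>
    ((hA.diff (hmeas n).1).inter ((hebij n).1 (hB.diff (hmeas n).2)))
  have hBnmeas : ∀ n, MeasurableSet (Bn n) := fun n =>
    (hebij n).emb.measurableSet_image' (hAnmeas n)
  -- inclusion facts
  have hAnA : ∀ n, An n ⊆ A \ gA n := fun n => inter_subset_left.trans (by rfl)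
  have hBnB : ∀ n, Bn n ⊆ B \ gB n := by
    intro n x hx
    rcases hx with ⟨y, hy, rfl⟩
    exact hy.2
  have hsubA : ∀ k n, k < n → An k ⊆ gA n := by
    intro k n
    induction n with
    | zero => omega
    | succ m ih =>
      intro hk
      rw [(hstep m).1]
      rcases Nat.lt_succ_iff_lt_or_eq.1 hk with h | h
      · exact (ih h).trans subset_union_left
      · rw [h]; exact subset_union_right
  have hsubB : ∀ k n, k < n → Bn k ⊆ gB n := by
    intro k n
    induction n with
    | zero => omega
    | succ m ih =>
      intro hk
      rw [(hstep m).2]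
      rcases Nat.lt_succ_iff_lt_or_eq.1 hk with h | h
      · exact (ih h).trans subset_union_left
      · rw [h]; exact subset_union_right
  have hgAsub : ∀ n, gA n ⊆ ⋃ k, An k := by
    intro n
    induction n with
    | zero => exact empty_subset _
    | succ m ih =>
      rw [(hstep m).1]
      exact union_subset ih (subset_iUnion An m)
  have hgBsub : ∀ n, gB n ⊆ ⋃ k, Bn k := by
    intro n
    induction n with
    | zero => exact empty_subset _
    | succ m ih =>
      rw [(hstep m).2]
      exact union_subset ih (subset_iUnion Bn m)
  -- pairwise disjoint
  have hdisjA : Pairwise (Disjoint on An) := by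
    have key : ∀ k n, k < n → Disjoint (An k) (An n) := by
      intro k n hk
      refine disjoint_left.2 fun x hx1 hx2 => ?_
      exact ((hAnA n) hx2).2 (hsubA k n hk hx1)
    intro i j hij
    rcases lt_or_gt_of_ne hij with h | h
    · exact key i j h
    · exact (key j i h).symm
  have hdisjB : Pairwise (Disjoint on Bn) := by
    have key : ∀ k n, k < n → Disjoint (Bn k) (Bn n) := by
      intro k n hk
      refine disjoint_left.2 fun x hx1 hx2 => ?_
      exact ((hBnB n) hx2).2 (hsubB k n hk hx1)
    intro i j hij
    rcases lt_or_gt_of_ne hij with h | h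
    · exact key i j h
    · exact (key j i h).symm
  -- equal measures of pieces
  have hmeq : ∀ n, ν (Bn n) = ν (An n) := fun n => (hebij n).measure_image (hAnmeas n)
  -- leftovers
  set A' : Set X := A \ ⋃ k, An k with hA'
  set B' : Set X := B \ ⋃ k, Bn k with hB'
  have hA'meas : MeasurableSet A' := hA.diff (MeasurableSet.iUnion hAnmeas)
  have hkey : ∀ n, ∀ x ∈ A', e n x ∉ B' := by
    intro n x hx hex
    have hx1 : x ∈ A \ gA n := ⟨hx.1, fun h => hx.2 (hgAsub n h)⟩
    have hx2 : e n x ∈ B \ gB n := ⟨hex.1, fun h => hex.2 (hgBsub n h)⟩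
    exact hx.2 (mem_iUnion.2 ⟨n, ⟨hx1, hx2⟩⟩)
  -- the invariant set
  set C : Set X := ⋃ n, e n '' A' with hC
  have hCmeas : MeasurableSet C :=
    MeasurableSet.iUnion fun n => (hebij n).emb.measurableSet_image' hA'meas
  have hCinv : ∀ S ∈ D, S '' C ⊆ C := by
    intro S hS
    rw [hC, image_iUnion]
    refine iUnion_subset fun n => ?_
    have : S ∘ e n ∈ D := hDgrp.2.2.1 S hS (e n) (heD n)
    rw [he] at this
    obtain ⟨m, hm⟩ := this
    rw [← image_comp, ← hm]
    exact subset_iUnion (fun k => e k '' A') m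
  have hCerg := herg C hCmeas (invariance_lemma ν G hG D hdense C hCmeas hCinv)
  have hA'C : A' ⊆ C := by
    have : id ∈ D := hDgrp.2.1
    rw [he] at this
    obtain ⟨m, hm⟩ := this
    intro x hx
    exact mem_iUnion.2 ⟨m, ⟨x, hx, by rw [hm]; rfl⟩⟩
  have hB'C : B' ∩ C = ∅ := by
    ext x
    simp only [mem_inter_iff, mem_empty_iff_false, iff_false, not_and]
    intro hxB' hxC
    obtain ⟨n, a, ha, rfl⟩ := mem_iUnion.1 hxC
    exact hkey n a ha hxB'
  -- measure bookkeeping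
  have hUA : ⋃ k, An k ⊆ A := iUnion_subset fun n => (hAnA n).trans diff_subset
  have hUB : ⋃ k, Bn k ⊆ B := iUnion_subset fun n => (hBnB n).trans diff_subset
  have hUAm : MeasurableSet (⋃ k, An k) := MeasurableSet.iUnion hAnmeas
  have hUBm : MeasurableSet (⋃ k, Bn k) := MeasurableSet.iUnion hBnmeas
  have hsum : ν (⋃ k, An k) = ν (⋃ k, Bn k) := by
    rw [measure_iUnion hdisjA hAnmeas, measure_iUnion hdisjB hBnmeas]
    exact tsum_congr fun n => (hmeq n).symm
  have hfinB : ν B ≠ ⊤ := (hBA.trans_lt (lt_top_iff_ne_top.2 hfinA)).ne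
  have hend : ν B' = 0 ∧ ν (⋃ k, An k) = ν B := by
    rcases hCerg with h0 | h0
    · -- ν C = 0 so ν A' = 0
      have hA'0 : ν A' = 0 := measure_mono_null hA'C h0
      have h1 : ν (⋃ k, An k) = ν A := by
        have := measure_diff_add_inter (μ := ν) A hUAm
        rw [inter_eq_right.2 hUA] at this
        rw [← hA'] at this
        rw [← this, hA'0, zero_add]
      have h2 : ν (⋃ k, Bn k) = ν A := by rw [← hsum, h1]
      have h3 : ν A ≤ ν B := h2 ▸ measure_mono hUB
      have hEq : ν A = ν B := le_antisymm h3 hBA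
      constructor
      · rw [hB', measure_diff hUB hUBm.nullMeasurableSet (by rw [h2, hEq]; exact hfinB),
          h2, hEq, tsub_self]
      · rw [h1, hEq]
    · -- ν Cᶜ = 0 so ν B' = 0
      have hB'0 : ν B' = 0 := by
        refine measure_mono_null (fun x hx => ?_) h0
        intro hxC
        exact (eq_empty_iff_forall_notMem.1 hB'C x) ⟨hx, hxC⟩
      have h2 : ν (⋃ k, Bn k) = ν B := by
        have := measure_diff_add_inter (μ := ν) B hUBm
        rw [inter_eq_right.2 hUB, ← hB', hB'0, zero_add] at this
        exact this
      exact ⟨hB'0, by rw [hsum, h2]⟩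
  exact ⟨An, Bn, e, hAnmeas, fun n => (hAnA n).trans diff_subset, hdisjA,
    hBnmeas, fun n => (hBnB n).trans diff_subset, hdisjB,
    hend.1, hend.2, heG, fun n => rfl⟩

section Cover

variable [MeasurableSpace X] [StandardBorelSpace X]
  (ν : Measure X) [SigmaFinite ν]
  (G : Set (X → X)) (hG : IsMPSubgroup ν G) (herg : IsErgodicSet ν G)
  (D : Set (X → X)) (hDsub : D ⊆ G) (hDcount : D.Countable) (hDgrp : IsMPSubgroup ν D)
  (hdense : ∀ T ∈ G, ∃ Ts : ℕ → X → X, (∀ n, Ts n ∈ D) ∧ WeakTendsto ν Ts T)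

include hG herg hDsub hDcount hDgrp hdense in
/-- Map a finite-measure set `P` (fully, mod null) onto pieces of an
infinite-measure set `W`; output pairs go from `P` to `W`. -/
lemma cover_small (P W : Set X) (hP : MeasurableSet P) (hW : MeasurableSet W)
    (hPfin : ν P ≠ ⊤) (hWinf : ν W = ⊤) :
    ∃ (an bn : ℕ → Set X) (tn : ℕ → X → X),
      (∀ n, MeasurableSet (an n)) ∧ (∀ n, an n ⊆ P) ∧ Pairwise (Disjoint on an) ∧
      (∀ n, MeasurableSet (bn n)) ∧ (∀ n, bn n ⊆ W) ∧ Pairwise (Disjoint on bn) ∧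
      ν (P \ ⋃ n, an n) = 0 ∧ ν (⋃ n, bn n) ≠ ⊤ ∧
      (∀ n, tn n ∈ G) ∧ (∀ n, tn n '' an n = bn n) := by
  obtain ⟨T, hTmeas, hTW, hPT, hTfin⟩ :=
    Measure.exists_subset_measure_lt_top hW (by rw [hWinf]; exact lt_top_iff_ne_top.2 hPfin)
  obtain ⟨Cn, Dn, Tn, hCnm, hCnT, hCdisj, hDnm, hDnP, hDdisj, hPcov, hCsum, hTnG, hTnim⟩ :=
    exchange_core ν G hG herg D hDsub hDcount hDgrp hdense T P hTmeas hP hPT.le hTfin.ne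
  choose Sn hSnG hSli hSri using fun n => hG.2.2.2 (Tn n) (hTnG n)
  have hSim : ∀ n, Sn n '' Dn n = Cn n := by
    intro n
    rw [← hTnim n, ← image_comp]
    have : Sn n ∘ Tn n = id := funext fun x => hSli n x
    rw [this, image_id]
  exact ⟨Dn, Cn, Sn, hDnm, hDnP, hDdisj, hCnm, fun n => (hCnT n).trans hTW, hCdisj,
    hPcov, by rw [hCsum]; exact hPfin, hSnG, hSim⟩

include hG herg hDsub hDcount hDgrp hdense in
/-- Map pieces of an infinite-measure set `W` onto a finite-measure set `Q`
(fully, mod null); output pairs go from `W` to `Q`. -/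
lemma cover_small' (Q W : Set X) (hQ : MeasurableSet Q) (hW : MeasurableSet W)
    (hQfin : ν Q ≠ ⊤) (hWinf : ν W = ⊤) :
    ∃ (an bn : ℕ → Set X) (tn : ℕ → X → X),
      (∀ n, MeasurableSet (an n)) ∧ (∀ n, an n ⊆ W) ∧ Pairwise (Disjoint on an) ∧
      (∀ n, MeasurableSet (bn n)) ∧ (∀ n, bn n ⊆ Q) ∧ Pairwise (Disjoint on bn) ∧
      ν (Q \ ⋃ n, bn n) = 0 ∧ ν (⋃ n, an n) ≠ ⊤ ∧
      (∀ n, tn n ∈ G) ∧ (∀ n, tn n '' an n = bn n) := by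
  obtain ⟨T, hTmeas, hTW, hQT, hTfin⟩ :=
    Measure.exists_subset_measure_lt_top hW (by rw [hWinf]; exact lt_top_iff_ne_top.2 hQfin)
  obtain ⟨An, Bn, Tn, hAnm, hAnT, hAdisj, hBnm, hBnQ, hBdisj, hQcov, hAsum, hTnG, hTnim⟩ :=
    exchange_core ν G hG herg D hDsub hDcount hDgrp hdense T Q hTmeas hQ hQT.le hTfin.ne
  exact ⟨An, Bn, Tn, hAnm, fun n => (hAnT n).trans hTW, hAdisj, hBnm, hBnQ, hBdisj,
    hQcov, by rw [hAsum]; exact hQfin, hTnG, hTnim⟩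

end Cover

def mergeSeq {α : Type*} (f g : ℕ → α) : ℕ → α := fun n => if n % 2 = 0 then f (n / 2) else g (n / 2)

lemma mergeSeq_cases {α : Type*} (f g : ℕ → α) (p : α → Prop)
    (hf : ∀ n, p (f n)) (hg : ∀ n, p (g n)) : ∀ n, p (mergeSeq f g n) := by
  intro n
  unfold mergeSeq
  split <;> [exact hf _; exact hg _]

lemma iUnion_mergeSeq {α : Type*} (f g : ℕ → Set α) :
    ⋃ n, mergeSeq f g n = (⋃ n, f n) ∪ ⋃ n, g n := by
  apply subset_antisymm
  · refine iUnion_subset fun n => ?_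
    unfold mergeSeq
    split
    · exact (subset_iUnion f _).trans subset_union_left
    · exact (subset_iUnion g _).trans subset_union_right
  · refine union_subset (iUnion_subset fun n => ?_) (iUnion_subset fun n => ?_)
    · have : mergeSeq f g (2 * n) = f n := by unfold mergeSeq; simp [Nat.mul_div_cancel_left]
      exact this ▸ subset_iUnion (mergeSeq f g) (2 * n)
    · have : mergeSeq f g (2 * n + 1) = g n := by
        unfold mergeSeq
        have h1 : (2 * n + 1) % 2 = 1 := by omega
        have h2 : (2 * n + 1) / 2 = n := by omega
        simp [h1, h2]
      exact this ▸ subset_iUnion (mergeSeq f g) (2 * n + 1)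

lemma pairwise_mergeSeq {α : Type*} {f g : ℕ → Set α} (hf : Pairwise (Disjoint on f))
    (hg : Pairwise (Disjoint on g)) (hfg : ∀ i j, Disjoint (f i) (g j)) :
    Pairwise (Disjoint on mergeSeq f g) := by
  intro i j hij
  simp only [Function.onFun, mergeSeq]
  by_cases hi : i % 2 = 0 <;> by_cases hj : j % 2 = 0
  · rw [if_pos hi, if_pos hj]; exact hf (show i / 2 ≠ j / 2 by omega)
  · rw [if_pos hi, if_neg hj]; exact hfg _ _
  · rw [if_neg hi, if_pos hj]; exact (hfg _ _).symm
  · rw [if_neg hi, if_neg hj]; exact hg (show i / 2 ≠ j / 2 by omega)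

lemma mergeSeq_cases₃ {α β γ : Type*} (f g : ℕ → α) (f' g' : ℕ → β) (f'' g'' : ℕ → γ)
    (p : α → β → γ → Prop) (hf : ∀ n, p (f n) (f' n) (f'' n)) (hg : ∀ n, p (g n) (g' n) (g'' n)) :
    ∀ n, p (mergeSeq f g n) (mergeSeq f' g' n) (mergeSeq f'' g'' n) := by
  intro n
  unfold mergeSeq
  split <;> [exact hf _; exact hg _]

section Step

variable [MeasurableSpace X] [StandardBorelSpace X]
  (ν : Measure X) [SigmaFinite ν]
  (G : Set (X → X)) (hG : IsMPSubgroup ν G) (herg : IsErgodicSet ν G)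
  (D : Set (X → X)) (hDsub : D ⊆ G) (hDcount : D.Countable) (hDgrp : IsMPSubgroup ν D)
  (hdense : ∀ T ∈ G, ∃ Ts : ℕ → X → X, (∀ n, Ts n ∈ D) ∧ WeakTendsto ν Ts T)

include hG herg hDsub hDcount hDgrp hdense in
lemma step_ex (A B : Set X) (hA : MeasurableSet A) (hB : MeasurableSet B)
    (hAinf : ν A = ⊤) (hBinf : ν B = ⊤) (k : ℕ) (u : Set X × Set X)
    (hu1 : MeasurableSet u.1) (hu2 : MeasurableSet u.2) (hu1A : u.1 ⊆ A) (hu2B : u.2 ⊆ B)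
    (hu1f : ν u.1 ≠ ⊤) (hu2f : ν u.2 ≠ ⊤) :
    ∃ (v : Set X × Set X) (an bn : ℕ → Set X) (tn : ℕ → X → X),
      MeasurableSet v.1 ∧ MeasurableSet v.2 ∧ v.1 ⊆ A ∧ v.2 ⊆ B ∧ ν v.1 ≠ ⊤ ∧ ν v.2 ≠ ⊤ ∧
      u.1 ∪ (A ∩ spanningSets ν k) ⊆ v.1 ∧ u.2 ∪ (B ∩ spanningSets ν k) ⊆ v.2 ∧
      (∀ n, MeasurableSet (an n)) ∧ (∀ n, an n ⊆ v.1 \ u.1) ∧ Pairwise (Disjoint on an) ∧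
      (∀ n, MeasurableSet (bn n)) ∧ (∀ n, bn n ⊆ v.2 \ u.2) ∧ Pairwise (Disjoint on bn) ∧
      (∀ n, tn n ∈ G) ∧ (∀ n, tn n '' an n = bn n) ∧
      ν (v.1 \ (u.1 ∪ ⋃ n, an n)) = 0 ∧ ν (v.2 \ (u.2 ∪ ⋃ n, bn n)) = 0 := by
  have hSkfin : ν (spanningSets ν k) ≠ ⊤ := (measure_spanningSets_lt_top ν k).ne
  have hSkm : MeasurableSet (spanningSets ν k) := measurableSet_spanningSets ν k
  -- the new chunk of A
  set P : Set X := (A ∩ spanningSets ν k) \ u.1 with hP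
  have hPm : MeasurableSet P := ((hA.inter hSkm).diff hu1)
  have hPfin : ν P ≠ ⊤ :=
    ((measure_mono (diff_subset.trans inter_subset_right)).trans_lt
      (measure_spanningSets_lt_top ν k)).ne
  have hWBinf : ν (B \ u.2) = ⊤ := by
    by_contra h
    have : ν B ≤ ν u.2 + ν (B \ u.2) := by
      conv_lhs => rw [← union_diff_cancel hu2B]
      exact measure_union_le _ _
    rw [hBinf] at this
    exact absurd (eq_top_iff.2 this) (ENNReal.add_ne_top.2 ⟨hu2f, h⟩)
  obtain ⟨a1, b1, t1, ha1m, ha1P, ha1d, hb1m, hb1W, hb1d, hPcov, hb1fin, ht1G, ht1im⟩ :=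
    cover_small ν G hG herg D hDsub hDcount hDgrp hdense P (B \ u.2) hPm (hB.diff hu2)
      hPfin hWBinf
  set uA2 : Set X := u.1 ∪ P with huA2
  set uB2 : Set X := u.2 ∪ ⋃ n, b1 n with huB2
  have huA2m : MeasurableSet uA2 := hu1.union hPm
  have huB2m : MeasurableSet uB2 := hu2.union (MeasurableSet.iUnion hb1m)
  have huA2f : ν uA2 ≠ ⊤ := by
    refine ((measure_union_le _ _).trans_lt ?_).ne
    exact ENNReal.add_lt_top.2 ⟨lt_top_iff_ne_top.2 hu1f, lt_top_iff_ne_top.2 hPfin⟩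
  have huB2f : ν uB2 ≠ ⊤ := by
    refine ((measure_union_le _ _).trans_lt ?_).ne
    exact ENNReal.add_lt_top.2 ⟨lt_top_iff_ne_top.2 hu2f, lt_top_iff_ne_top.2 hb1fin⟩
  have huA2A : uA2 ⊆ A := union_subset hu1A (diff_subset.trans inter_subset_left)
  have huB2B : uB2 ⊆ B :=
    union_subset hu2B (iUnion_subset fun n => (hb1W n).trans diff_subset)
  set Q : Set X := (B ∩ spanningSets ν k) \ uB2 with hQ
  have hQm : MeasurableSet Q := (hB.inter hSkm).diff huB2m
  have hQfin : ν Q ≠ ⊤ :=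
    ((measure_mono (diff_subset.trans inter_subset_right)).trans_lt
      (measure_spanningSets_lt_top ν k)).ne
  have hWAinf : ν (A \ uA2) = ⊤ := by
    by_contra h
    have : ν A ≤ ν uA2 + ν (A \ uA2) := by
      conv_lhs => rw [← union_diff_cancel huA2A]
      exact measure_union_le _ _
    rw [hAinf] at this
    exact absurd (eq_top_iff.2 this) (ENNReal.add_ne_top.2 ⟨huA2f, h⟩)
  obtain ⟨a2, b2, t2, ha2m, ha2W, ha2d, hb2m, hb2Q, hb2d, hQcov, ha2fin, ht2G, ht2im⟩ :=
    cover_small' ν G hG herg D hDsub hDcount hDgrp hdense Q (A \ uA2) hQm (hA.diff huA2m)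
      hQfin hWAinf
  refine ⟨(uA2 ∪ ⋃ n, a2 n, uB2 ∪ Q), mergeSeq a1 a2, mergeSeq b1 b2, mergeSeq t1 t2,
    ?_, ?_, ?_, ?_, ?_, ?_, ?_, ?_, ?_, ?_, ?_, ?_, ?_, ?_, ?_, ?_, ?_, ?_⟩
  · exact huA2m.union (MeasurableSet.iUnion ha2m)
  · exact huB2m.union hQm
  · exact union_subset huA2A (iUnion_subset fun n => (ha2W n).trans diff_subset)
  · exact union_subset huB2B (diff_subset.trans inter_subset_left)
  · refine ((measure_union_le _ _).trans_lt ?_).ne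
    exact ENNReal.add_lt_top.2 ⟨lt_top_iff_ne_top.2 huA2f, lt_top_iff_ne_top.2 ha2fin⟩
  · refine ((measure_union_le _ _).trans_lt ?_).ne
    exact ENNReal.add_lt_top.2 ⟨lt_top_iff_ne_top.2 huB2f, lt_top_iff_ne_top.2 hQfin⟩
  · refine union_subset (subset_union_left.trans subset_union_left) fun x hx => ?_
    by_cases hxu : x ∈ u.1
    · exact Or.inl (Or.inl hxu)
    · exact Or.inl (Or.inr ⟨hx, hxu⟩)
  · refine union_subset (subset_union_left.trans subset_union_left) fun x hx => ?_
    by_cases hxu : x ∈ uB2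
    · exact Or.inl hxu
    · exact Or.inr ⟨hx, hxu⟩
  · exact mergeSeq_cases a1 a2 _ ha1m ha2m
  · refine mergeSeq_cases a1 a2 (fun s => s ⊆ (uA2 ∪ ⋃ n, a2 n, uB2 ∪ Q).1 \ u.1) ?_ ?_
    · intro n
      refine (ha1P n).trans fun x hx => ⟨Or.inl (Or.inr hx), hx.2⟩
    · intro n x hx
      exact ⟨Or.inr (mem_iUnion.2 ⟨n, hx⟩), fun hu => (ha2W n hx).2 (Or.inl hu)⟩
  · refine pairwise_mergeSeq ha1d ha2d fun i j => ?_
    refine disjoint_left.2 fun x hx1 hx2 => ?_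
    exact (ha2W j hx2).2 (Or.inr (ha1P i hx1))
  · exact mergeSeq_cases b1 b2 _ hb1m hb2m
  · refine mergeSeq_cases b1 b2 (fun s => s ⊆ (uA2 ∪ ⋃ n, a2 n, uB2 ∪ Q).2 \ u.2) ?_ ?_
    · intro n x hx
      exact ⟨Or.inl (Or.inr (mem_iUnion.2 ⟨n, hx⟩)), (hb1W n hx).2⟩
    · intro n
      refine (hb2Q n).trans fun x hx => ⟨Or.inr hx, fun hu => hx.2 (Or.inl hu)⟩
  · refine pairwise_mergeSeq hb1d hb2d fun i j => ?_
    refine disjoint_left.2 fun x hx1 hx2 => ?_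
    exact (hb2Q j hx2).2 (Or.inr (mem_iUnion.2 ⟨i, hx1⟩))
  · exact mergeSeq_cases t1 t2 _ ht1G ht2G
  · exact mergeSeq_cases₃ t1 t2 a1 a2 b1 b2 (fun t a b => t '' a = b) ht1im ht2im
  · rw [iUnion_mergeSeq]
    refine measure_mono_null (fun x hx => ?_) hPcov
    rcases hx with ⟨hx1, hx2⟩
    simp only [mem_union, not_or] at hx2
    rcases hx1 with (h | h) | h
    · exact absurd h hx2.1
    · exact ⟨h, hx2.2.1⟩
    · exact absurd h hx2.2.2
  · rw [iUnion_mergeSeq]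
    refine measure_mono_null (fun x hx => ?_) hQcov
    rcases hx with ⟨hx1, hx2⟩
    simp only [mem_union, not_or] at hx2
    rcases hx1 with h | h
    · rcases h with h | h
      · exact absurd h hx2.1
      · exact absurd h hx2.2.1
    · exact ⟨h, hx2.2.2⟩

end Step

section Infinite

variable [MeasurableSpace X] [StandardBorelSpace X]
  (ν : Measure X) [SigmaFinite ν]
  (G : Set (X → X)) (hG : IsMPSubgroup ν G) (herg : IsErgodicSet ν G)
  (D : Set (X → X)) (hDsub : D ⊆ G) (hDcount : D.Countable) (hDgrp : IsMPSubgroup ν D)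
  (hdense : ∀ T ∈ G, ∃ Ts : ℕ → X → X, (∀ n, Ts n ∈ D) ∧ WeakTendsto ν Ts T)

include hG herg hDsub hDcount hDgrp hdense in
lemma exchange_infinite (A B : Set X) (hA : MeasurableSet A) (hB : MeasurableSet B)
    (hAinf : ν A = ⊤) (hBinf : ν B = ⊤) :
    ∃ (An Bn : ℕ → Set X) (Tn : ℕ → X → X),
      (∀ n, MeasurableSet (An n)) ∧ (∀ n, An n ⊆ A) ∧
      Pairwise (Disjoint on An) ∧ ν (A \ ⋃ n, An n) = 0 ∧
      (∀ n, MeasurableSet (Bn n)) ∧ (∀ n, Bn n ⊆ B) ∧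
      Pairwise (Disjoint on Bn) ∧ ν (B \ ⋃ n, Bn n) = 0 ∧
      (∀ n, Tn n ∈ G) ∧ (∀ n, Tn n '' An n = Bn n) := by
  have step' : ∀ (k : ℕ) (u : Set X × Set X),
      ∃ (v : Set X × Set X) (an bn : ℕ → Set X) (tn : ℕ → X → X),
        (MeasurableSet v.1 ∧ MeasurableSet v.2 ∧ v.1 ⊆ A ∧ v.2 ⊆ B ∧ ν v.1 ≠ ⊤ ∧ ν v.2 ≠ ⊤) ∧
        ((MeasurableSet u.1 ∧ MeasurableSet u.2 ∧ u.1 ⊆ A ∧ u.2 ⊆ B ∧ ν u.1 ≠ ⊤ ∧ ν u.2 ≠ ⊤) →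
          (u.1 ∪ (A ∩ spanningSets ν k) ⊆ v.1 ∧ u.2 ∪ (B ∩ spanningSets ν k) ⊆ v.2 ∧
          (∀ n, MeasurableSet (an n)) ∧ (∀ n, an n ⊆ v.1 \ u.1) ∧ Pairwise (Disjoint on an) ∧
          (∀ n, MeasurableSet (bn n)) ∧ (∀ n, bn n ⊆ v.2 \ u.2) ∧ Pairwise (Disjoint on bn) ∧
          (∀ n, tn n ∈ G) ∧ (∀ n, tn n '' an n = bn n) ∧
          ν (v.1 \ (u.1 ∪ ⋃ n, an n)) = 0 ∧ ν (v.2 \ (u.2 ∪ ⋃ n, bn n)) = 0)) := by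
    intro k u
    by_cases h : MeasurableSet u.1 ∧ MeasurableSet u.2 ∧ u.1 ⊆ A ∧ u.2 ⊆ B ∧
        ν u.1 ≠ ⊤ ∧ ν u.2 ≠ ⊤
    · obtain ⟨v, an, bn, tn, h1, h2, h3, h4, h5, h6, hrest⟩ :=
        step_ex ν G hG herg D hDsub hDcount hDgrp hdense A B hA hB hAinf hBinf k u
          h.1 h.2.1 h.2.2.1 h.2.2.2.1 h.2.2.2.2.1 h.2.2.2.2.2
      exact ⟨v, an, bn, tn, ⟨h1, h2, h3, h4, h5, h6⟩, fun _ => hrest⟩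
    · refine ⟨(∅, ∅), fun _ => ∅, fun _ => ∅, fun _ => id,
        ⟨MeasurableSet.empty, MeasurableSet.empty, empty_subset _, empty_subset _,
          by simp, by simp⟩, fun hInv => absurd hInv h⟩
  choose nxt anF bnF tnF hInvF hRest using step'
  set F : ℕ → Set X × Set X := fun k => Nat.rec (∅, ∅) (fun k u => nxt k u) k with hF
  have hFs : ∀ k, F (k + 1) = nxt k (F k) := fun k => rfl
  have hInvAll : ∀ k, MeasurableSet (F k).1 ∧ MeasurableSet (F k).2 ∧ (F k).1 ⊆ A ∧
      (F k).2 ⊆ B ∧ ν (F k).1 ≠ ⊤ ∧ ν (F k).2 ≠ ⊤ := by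
    intro k
    cases k with
    | zero =>
      have hF0 : F 0 = (∅, ∅) := rfl
      rw [hF0]
      exact ⟨MeasurableSet.empty, MeasurableSet.empty, empty_subset _, empty_subset _,
        by simp, by simp⟩
    | succ m => exact (hFs m) ▸ hInvF m (F m)
  have hR := fun k => hRest k (F k) (hInvAll k)
  set ak : ℕ → ℕ → Set X := fun k => anF k (F k) with hak
  set bk : ℕ → ℕ → Set X := fun k => bnF k (F k) with hbk
  set tk : ℕ → ℕ → X → X := fun k => tnF k (F k) with htk
  -- components of hR, with v = F (k+1)
  have hR1 : ∀ k, (F k).1 ∪ (A ∩ spanningSets ν k) ⊆ (F (k+1)).1 := fun k => (hR k).1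
  have hR2 : ∀ k, (F k).2 ∪ (B ∩ spanningSets ν k) ⊆ (F (k+1)).2 := fun k => (hR k).2.1
  have hR3 : ∀ k n, MeasurableSet (ak k n) := fun k => (hR k).2.2.1
  have hR4 : ∀ k n, ak k n ⊆ (F (k+1)).1 \ (F k).1 := fun k => (hR k).2.2.2.1
  have hR5 : ∀ k, Pairwise (Disjoint on ak k) := fun k => (hR k).2.2.2.2.1
  have hR6 : ∀ k n, MeasurableSet (bk k n) := fun k => (hR k).2.2.2.2.2.1
  have hR7 : ∀ k n, bk k n ⊆ (F (k+1)).2 \ (F k).2 := fun k => (hR k).2.2.2.2.2.2.1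
  have hR8 : ∀ k, Pairwise (Disjoint on bk k) := fun k => (hR k).2.2.2.2.2.2.2.1
  have hR9 : ∀ k n, tk k n ∈ G := fun k => (hR k).2.2.2.2.2.2.2.2.1
  have hR10 : ∀ k n, tk k n '' ak k n = bk k n := fun k => (hR k).2.2.2.2.2.2.2.2.2.1
  have hR11 : ∀ k, ν ((F (k+1)).1 \ ((F k).1 ∪ ⋃ n, ak k n)) = 0 :=
    fun k => (hR k).2.2.2.2.2.2.2.2.2.2.1
  have hR12 : ∀ k, ν ((F (k+1)).2 \ ((F k).2 ∪ ⋃ n, bk k n)) = 0 :=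
    fun k => (hR k).2.2.2.2.2.2.2.2.2.2.2
  -- monotonicity
  have hmonoA : ∀ j k, j ≤ k → (F j).1 ⊆ (F k).1 := by
    intro j k hjk
    induction k with
    | zero => rw [Nat.le_zero.1 hjk]
    | succ m ih =>
      rcases Nat.le_succ_iff.1 hjk with h | h
      · exact (ih h).trans (subset_union_left.trans (hR1 m))
      · rw [h]
  have hmonoB : ∀ j k, j ≤ k → (F j).2 ⊆ (F k).2 := by
    intro j k hjk
    induction k with
    | zero => rw [Nat.le_zero.1 hjk]
    | succ m ih =>
      rcases Nat.le_succ_iff.1 hjk with h | h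
      · exact (ih h).trans (subset_union_left.trans (hR2 m))
      · rw [h]
  -- final families
  refine ⟨fun i => ak (Nat.unpair i).1 (Nat.unpair i).2,
    fun i => bk (Nat.unpair i).1 (Nat.unpair i).2,
    fun i => tk (Nat.unpair i).1 (Nat.unpair i).2,
    fun i => hR3 _ _, fun i x hx => (hInvAll ((Nat.unpair i).1 + 1)).2.2.1 (hR4 (Nat.unpair i).1 (Nat.unpair i).2 hx).1,
    ?_, ?_, fun i => hR6 _ _, fun i x hx => (hInvAll ((Nat.unpair i).1 + 1)).2.2.2.1 (hR7 (Nat.unpair i).1 (Nat.unpair i).2 hx).1,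
    ?_, ?_, fun i => hR9 _ _, fun i => hR10 _ _⟩
  · -- pairwise disjoint A side
    intro i j hij
    simp only [Function.onFun]
    have hcross : ∀ p q m n, p < q → Disjoint (ak p m) (ak q n) := by
      intro p q m n hpq
      refine disjoint_left.2 fun x hx1 hx2 => ?_
      exact (hR4 q n hx2).2 (hmonoA (p+1) q hpq ((hR4 p m hx1).1))
    rcases lt_trichotomy (Nat.unpair i).1 (Nat.unpair j).1 with h | h | h
    · exact hcross _ _ _ _ h
    · have hne : (Nat.unpair i).2 ≠ (Nat.unpair j).2 := by
        intro h2
        apply hij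
        have : Nat.unpair i = Nat.unpair j := Prod.ext h h2
        have := congrArg (fun p => Nat.pair p.1 p.2) this
        simpa [Nat.pair_unpair] using this
      have := hR5 (Nat.unpair i).1 hne
      rw [h] at this ⊢
      exact this
    · exact (hcross _ _ _ _ h).symm
  · -- A covered
    have hUeq : ⋃ i, ak (Nat.unpair i).1 (Nat.unpair i).2 = ⋃ k, ⋃ n, ak k n := by
      apply subset_antisymm
      · exact iUnion_subset fun i =>
          (subset_iUnion (fun n => ak (Nat.unpair i).1 n) (Nat.unpair i).2).trans
            (subset_iUnion (fun k => ⋃ n, ak k n) (Nat.unpair i).1)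
      · refine iUnion_subset fun k => iUnion_subset fun n => ?_
        have : ak k n = ak (Nat.unpair (Nat.pair k n)).1 (Nat.unpair (Nat.pair k n)).2 := by
          rw [Nat.unpair_pair]
        rw [this]
        exact subset_iUnion (fun i => ak (Nat.unpair i).1 (Nat.unpair i).2) (Nat.pair k n)
    rw [hUeq]
    set U : Set X := ⋃ k, ⋃ n, ak k n with hU
    have hnullk : ∀ k, ν ((F k).1 \ U) = 0 := by
      intro k
      induction k with
      | zero => simp [hF]
      | succ m ih =>
        have hsub : (F (m+1)).1 \ U ⊆ ((F m).1 \ U) ∪ ((F (m+1)).1 \ ((F m).1 ∪ ⋃ n, ak m n)) := by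
          intro x hx
          by_cases hxm : x ∈ (F m).1
          · exact Or.inl ⟨hxm, hx.2⟩
          · refine Or.inr ⟨hx.1, fun hc => ?_⟩
            rcases hc with hc | hc
            · exact hxm hc
            · exact hx.2 (mem_iUnion.2 ⟨m, hc⟩)
        exact measure_mono_null hsub (measure_union_null ih (hR11 m))
    have hcov : A \ U ⊆ ⋃ k, ((F (k+1)).1 \ U) := by
      intro x hx
      have hx2 : x ∈ ⋃ k, spanningSets ν k := by rw [iUnion_spanningSets]; trivial
      obtain ⟨k, hk⟩ := mem_iUnion.1 hx2
      exact mem_iUnion.2 ⟨k, ⟨hR1 k (Or.inr ⟨hx.1, hk⟩), hx.2⟩⟩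
    exact measure_mono_null hcov (measure_iUnion_null fun k => hnullk (k+1))
  · -- pairwise disjoint B side
    intro i j hij
    simp only [Function.onFun]
    have hcross : ∀ p q m n, p < q → Disjoint (bk p m) (bk q n) := by
      intro p q m n hpq
      refine disjoint_left.2 fun x hx1 hx2 => ?_
      exact (hR7 q n hx2).2 (hmonoB (p+1) q hpq ((hR7 p m hx1).1))
    rcases lt_trichotomy (Nat.unpair i).1 (Nat.unpair j).1 with h | h | h
    · exact hcross _ _ _ _ h
    · have hne : (Nat.unpair i).2 ≠ (Nat.unpair j).2 := by
        intro h2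
        apply hij
        have : Nat.unpair i = Nat.unpair j := Prod.ext h h2
        have := congrArg (fun p => Nat.pair p.1 p.2) this
        simpa [Nat.pair_unpair] using this
      have := hR8 (Nat.unpair i).1 hne
      rw [h] at this ⊢
      exact this
    · exact (hcross _ _ _ _ h).symm
  · -- B covered
    have hUeq : ⋃ i, bk (Nat.unpair i).1 (Nat.unpair i).2 = ⋃ k, ⋃ n, bk k n := by
      apply subset_antisymm
      · exact iUnion_subset fun i =>
          (subset_iUnion (fun n => bk (Nat.unpair i).1 n) (Nat.unpair i).2).trans
            (subset_iUnion (fun k => ⋃ n, bk k n) (Nat.unpair i).1)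
      · refine iUnion_subset fun k => iUnion_subset fun n => ?_
        have : bk k n = bk (Nat.unpair (Nat.pair k n)).1 (Nat.unpair (Nat.pair k n)).2 := by
          rw [Nat.unpair_pair]
        rw [this]
        exact subset_iUnion (fun i => bk (Nat.unpair i).1 (Nat.unpair i).2) (Nat.pair k n)
    rw [hUeq]
    set U : Set X := ⋃ k, ⋃ n, bk k n with hU
    have hnullk : ∀ k, ν ((F k).2 \ U) = 0 := by
      intro k
      induction k with
      | zero => simp [hF]
      | succ m ih =>
        have hsub : (F (m+1)).2 \ U ⊆ ((F m).2 \ U) ∪ ((F (m+1)).2 \ ((F m).2 ∪ ⋃ n, bk m n)) := by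
          intro x hx
          by_cases hxm : x ∈ (F m).2
          · exact Or.inl ⟨hxm, hx.2⟩
          · refine Or.inr ⟨hx.1, fun hc => ?_⟩
            rcases hc with hc | hc
            · exact hxm hc
            · exact hx.2 (mem_iUnion.2 ⟨m, hc⟩)
        exact measure_mono_null hsub (measure_union_null ih (hR12 m))
    have hcov : B \ U ⊆ ⋃ k, ((F (k+1)).2 \ U) := by
      intro x hx
      have hx2 : x ∈ ⋃ k, spanningSets ν k := by rw [iUnion_spanningSets]; trivial
      obtain ⟨k, hk⟩ := mem_iUnion.1 hx2
      exact mem_iUnion.2 ⟨k, ⟨hR2 k (Or.inr ⟨hx.1, hk⟩), hx.2⟩⟩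
    exact measure_mono_null hcov (measure_iUnion_null fun k => hnullk (k+1))

end Infinite

theorem pseudo_full_group_exchange' [MeasurableSpace X] [StandardBorelSpace X]
    (ν : MeasureTheory.Measure X) [SigmaFinite ν]
    (G : Set (X → X)) (hG : IsMPSubgroup ν G) (herg : IsErgodicSet ν G)
    (D : Set (X → X)) (hDsub : D ⊆ G) (hDcount : D.Countable) (hDgrp : IsMPSubgroup ν D)
    (hdense : ∀ T ∈ G, ∃ Ts : ℕ → X → X, (∀ n, Ts n ∈ D) ∧ WeakTendsto ν Ts T)
    (A B : Set X) (hA : MeasurableSet A) (hB : MeasurableSet B) (hAB : ν A = ν B) :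
    ∃ (An Bn : ℕ → Set X) (Tn : ℕ → X → X),
      (∀ n, MeasurableSet (An n)) ∧ (∀ n, An n ⊆ A) ∧
      Pairwise (Disjoint on An) ∧ ν (A \ ⋃ n, An n) = 0 ∧
      (∀ n, MeasurableSet (Bn n)) ∧ (∀ n, Bn n ⊆ B) ∧
      Pairwise (Disjoint on Bn) ∧ ν (B \ ⋃ n, Bn n) = 0 ∧
      (∀ n, Tn n ∈ G) ∧ (∀ n, Tn n '' An n = Bn n) := by
  by_cases hfin : ν A = ⊤
  · exact exchange_infinite ν G hG herg D hDsub hDcount hDgrp hdense A B hA hB hfin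
      (hAB ▸ hfin)
  · obtain ⟨An, Bn, Tn, h1, h2, h3, h4, h5, h6, h7, h8, h9, h10⟩ :=
      exchange_core ν G hG herg D hDsub hDcount hDgrp hdense A B hA hB hAB.ge hfin
    have hUA : (⋃ n, An n) ⊆ A := iUnion_subset h2
    have hUAm : MeasurableSet (⋃ n, An n) := MeasurableSet.iUnion h1
    have hAnull : ν (A \ ⋃ n, An n) = 0 := by
      rw [measure_diff hUA hUAm.nullMeasurableSet (by rw [h8, ← hAB]; exact hfin),
        h8, ← hAB, tsub_self]
    exact ⟨An, Bn, Tn, h1, h2, h3, hAnull, h4, h5, h6, h7, h9, h10⟩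

/-- For an ergodic subgroup `G` of `Aut(X,ν)` with a countable weakly dense subgroup,
any two Borel sets of equal (possibly infinite) measure are exchanged by a partial
isomorphism of the pseudo-full group of `G`: there are countable Borel partitions
`(Aₙ)` of `A` and `(Bₙ)` of `B` (up to null sets) and elements `Tₙ ∈ G` with
`Tₙ(Aₙ) = Bₙ`. -/
theorem pseudo_full_group_exchange [MeasurableSpace X] [StandardBorelSpace X]
    (ν : MeasureTheory.Measure X) [SigmaFinite ν] [NullSingletonClass ν]
    (G : Set (X → X)) (hG : IsMPSubgroup ν G) (herg : IsErgodicSet ν G)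
    (D : Set (X → X)) (hDsub : D ⊆ G) (hDcount : D.Countable) (hDgrp : IsMPSubgroup ν D)
    (hdense : ∀ T ∈ G, ∃ Ts : ℕ → X → X, (∀ n, Ts n ∈ D) ∧ WeakTendsto ν Ts T)
    (A B : Set X) (hA : MeasurableSet A) (hB : MeasurableSet B) (hAB : ν A = ν B) :
    ∃ (An Bn : ℕ → Set X) (Tn : ℕ → X → X),
      (∀ n, MeasurableSet (An n)) ∧ (∀ n, An n ⊆ A) ∧
      Pairwise (Disjoint on An) ∧ ν (A \ ⋃ n, An n) = 0 ∧
      (∀ n, MeasurableSet (Bn n)) ∧ (∀ n, Bn n ⊆ B) ∧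
      Pairwise (Disjoint on Bn) ∧ ν (B \ ⋃ n, Bn n) = 0 ∧
      (∀ n, Tn n ∈ G) ∧ (∀ n, Tn n '' An n = Bn n) := by
  exact pseudo_full_group_exchange' ν G hG herg D hDsub hDcount hDgrp hdense A B hA hB hAB
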